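/- Let V be a finite-dimensional Gel'fand–Dorfman bialgebra over ℂ such that there exists x ∈ V and k ∈ ℂ∖{0} with x∘b = k·b for all b ∈ V. Let n be a natural number and let d^0,…,d^n be linear maps from V into the space of polynomial maps ℂ → V satisfying the conformal derivation equation (E). Then d^i = 0 for all i ≥ 2, and for all a, b ∈ V and λ ∈ ℂ: (G1) d^1_λ(b∘a) = d^1_λ(b)∘a; (G2) d^1_λ(a)∗b = d^1_λ(b)∗a; (G3) d^0_λ(b∘a) + λ d^1_λ(b∘a) + d^1_λ([b,a]) = b∘d^0_λ(a) − λ(b∘d^1_λ(a)) + d^0_λ(b)∘a + [d^1_λ(b), a]; (G4) λ d^0_λ(b∘a) + d^0_λ([b,a]) = λ(d^0_λ(a)∗b) − λ²(d^1_λ(a)∗b) + [b, d^0_λ(a)] − λ[b, d^1_λ(a)] + [d^0_λ(b), a]. -/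
import Mathlib


set_option maxRecDepth 10000

open Finset in
private lemma polyfun_coeff_zero_aux {V : Type*} [AddCommGroup V] [Module ℂ V]
    {N : ℕ} {v : ℕ → V}
    (h : ∀ t : ℂ, t ≠ 0 → ∑ j ∈ Finset.range N, t ^ j • v j = 0) :
    ∀ j, j < N → v j = 0 := by
  intro j hj
  rw [← Module.forall_dual_apply_eq_zero_iff ℂ]
  intro φ
  have hroot : ∀ t : ℂ, t ≠ 0 →
      (∑ i ∈ Finset.range N, Polynomial.C (φ (v i)) * Polynomial.X ^ i).eval t = 0 := by
    intro t ht
    have h2 := congrArg φ (h t ht)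
    simp only [map_sum, map_smul, smul_eq_mul, map_zero] at h2
    rw [Polynomial.eval_finset_sum]
    rw [← h2]
    refine Finset.sum_congr rfl fun i _ => ?_
    rw [Polynomial.eval_mul, Polynomial.eval_C, Polynomial.eval_pow, Polynomial.eval_X]
    ring
  have hp0 : (∑ i ∈ Finset.range N, Polynomial.C (φ (v i)) * Polynomial.X ^ i) = 0 := by
    apply Polynomial.eq_zero_of_infinite_isRoot
    exact (Set.Finite.infinite_compl (Set.finite_singleton 0)).mono
      (fun t ht => hroot t (by simpa using ht))
  have hc := congrArg (fun p => Polynomial.coeff p j) hp0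
  simp only [Polynomial.finset_sum_coeff, Polynomial.coeff_C_mul, Polynomial.coeff_X_pow,
    Polynomial.coeff_zero, mul_ite, mul_one, mul_zero] at hc
  rw [Finset.sum_ite_eq] at hc
  simpa [Finset.mem_range.mpr hj] using hc

open Finset in
private lemma three_extract_aux {V : Type*} [AddCommGroup V] [Module ℂ V] {W0 W1 W2 : V}
    (h : ∀ μ : ℂ, μ ≠ 0 → W0 + μ • W1 + μ^2 • W2 = 0) :
    W0 = 0 ∧ W1 = 0 ∧ W2 = 0 := by
  have hp := polyfun_coeff_zero_aux (N := 3)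
    (v := fun q => match q with | 0 => W0 | 1 => W1 | 2 => W2 | _ => 0)
    (by
      intro t ht
      rw [Finset.sum_range_succ, Finset.sum_range_succ, Finset.sum_range_succ,
        Finset.sum_range_zero]
      simp only [pow_zero, pow_one, one_smul, zero_add]
      exact h t ht)
  exact ⟨hp 0 (by omega), hp 1 (by omega), hp 2 (by omega)⟩

open Finset in
private lemma nine_extract_aux {V : Type*} [AddCommGroup V] [Module ℂ V]
    {W00 W01 W02 W10 W11 W20 : V}
    (h : ∀ x μ : ℂ,
      (W00 + μ • W01 + μ^2 • W02) + x • (W10 + μ • W11) + x^2 • W20 = 0) :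
    W00 = 0 ∧ W01 = 0 ∧ W02 = 0 ∧ W10 = 0 ∧ W11 = 0 ∧ W20 = 0 := by
  have h1 : ∀ μ : ℂ, μ ≠ 0 →
      ((W00 + μ • W01 + μ^2 • W02) = 0 ∧ (W10 + μ • W11) = 0 ∧ W20 = 0) := by
    intro μ hμ
    exact three_extract_aux (fun x _ => h x μ)
  have hW20 : W20 = 0 := (h1 1 one_ne_zero).2.2
  obtain ⟨h00, h01, h02⟩ := three_extract_aux (fun μ hμ => (h1 μ hμ).1)
  have h3 : ∀ μ : ℂ, μ ≠ 0 → (W10 + μ • W11) + μ^2 • (0:V) = 0 := by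
    intro μ hμ
    simpa using (h1 μ hμ).2.1
  obtain ⟨h10, h11, -⟩ := three_extract_aux h3
  exact ⟨h00, h01, h02, h10, h11, hW20⟩

open Finset in
private lemma sum_shift_pow_aux {V : Type*} [AddCommGroup V] [Module ℂ V]
    (N : ℕ) (c : ℂ) (v : ℕ → V) (x : ℂ) :
    ∑ i ∈ range N, (c + x) ^ i • v i
      = ∑ p ∈ range N, x ^ p • ∑ i ∈ range N, ((i.choose p : ℂ) * c ^ (i - p)) • v i := by
  have key : ∀ i ∈ range N, (c + x) ^ i • v i
      = ∑ p ∈ range N, (x ^ p * ((i.choose p : ℂ) * c ^ (i - p))) • v i := by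
    intro i hi
    calc (c + x) ^ i • v i
        = ∑ p ∈ range (i+1), (x ^ p * c ^ (i - p) * (i.choose p : ℂ)) • v i := by
          rw [add_comm c x, add_pow, Finset.sum_smul]
      _ = ∑ p ∈ range N, (x ^ p * c ^ (i - p) * (i.choose p : ℂ)) • v i := by
          apply Finset.sum_subset
          · exact Finset.range_subset_range.mpr (Finset.mem_range.mp hi)
          · intro p _ hp
            have : i < p := by
              simp only [Finset.mem_range, not_lt] at hp; omega
            simp [Nat.choose_eq_zero_of_lt this]
      _ = ∑ p ∈ range N, (x ^ p * ((i.choose p : ℂ) * c ^ (i - p))) • v i := by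
          refine Finset.sum_congr rfl fun p _ => ?_
          congr 1; ring
  rw [Finset.sum_congr rfl key, Finset.sum_comm]
  exact Finset.sum_congr rfl fun p _ => by
    rw [Finset.smul_sum]
    exact Finset.sum_congr rfl fun i _ => mul_smul _ _ _

open Finset in
private lemma rep_sum_aux {V : Type*} [AddCommGroup V] [Module ℂ V]
    (N : ℕ) (c : ℂ) (γ δ : ℕ → V) (x : ℂ) :
    ∑ i ∈ range N, (c + x) ^ i • (x • γ i + δ i)
      = ∑ p ∈ range (N+1), x ^ p •
          ((if p = 0 then 0 else ∑ i ∈ range N, ((i.choose (p-1) : ℂ) * c ^ (i - (p-1))) • γ i)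
            + ∑ i ∈ range N, ((i.choose p : ℂ) * c ^ (i - p)) • δ i) := by
  have h1 : ∑ i ∈ range N, (c + x) ^ i • (x • γ i + δ i)
      = x • (∑ i ∈ range N, (c + x) ^ i • γ i) + ∑ i ∈ range N, (c + x) ^ i • δ i := by
    rw [Finset.smul_sum, ← Finset.sum_add_distrib]
    exact Finset.sum_congr rfl fun i _ => by module
  have h2 : ∑ p ∈ range (N+1), x ^ p •
          ((if p = 0 then (0:V) else ∑ i ∈ range N, ((i.choose (p-1) : ℂ) * c ^ (i - (p-1))) • γ i)
            + ∑ i ∈ range N, ((i.choose p : ℂ) * c ^ (i - p)) • δ i)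
      = (∑ p ∈ range (N+1), x ^ p •
          (if p = 0 then (0:V) else ∑ i ∈ range N, ((i.choose (p-1) : ℂ) * c ^ (i - (p-1))) • γ i))
        + ∑ p ∈ range (N+1), x ^ p • ∑ i ∈ range N, ((i.choose p : ℂ) * c ^ (i - p)) • δ i := by
    rw [← Finset.sum_add_distrib]
    exact Finset.sum_congr rfl fun p _ => smul_add _ _ _
  rw [h1, h2]
  congr 1
  · rw [sum_shift_pow_aux N c γ x, Finset.smul_sum, Finset.sum_range_succ']
    have h0 : (x:ℂ) ^ 0 • (if (0:ℕ) = 0 then (0:V) else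
        ∑ i ∈ range N, ((i.choose (0-1) : ℂ) * c ^ (i - (0-1))) • γ i) = 0 := by
      simp
    rw [h0, add_zero]
    refine Finset.sum_congr rfl fun p _ => ?_
    rw [if_neg (Nat.succ_ne_zero p), Nat.add_sub_cancel, pow_succ, mul_smul]
    rw [smul_comm]
  · rw [sum_shift_pow_aux N c δ x, Finset.sum_range_succ]
    have hz : ∑ i ∈ range N, ((i.choose N : ℂ) * c ^ (i - N)) • δ i = 0 := by
      apply Finset.sum_eq_zero
      intro i hi
      simp [Nat.choose_eq_zero_of_lt (Finset.mem_range.mp hi)]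
    rw [hz, smul_zero, add_zero]

open Finset in
private lemma rep_lin_aux {V : Type*} [AddCommGroup V] [Module ℂ V]
    (M : ℕ) (K0 K1 : V) (x : ℂ) :
    x • K1 + K0 = ∑ p ∈ range (M+2), x ^ p •
      ((if p = 0 then K0 else 0) + (if p = 1 then K1 else 0)) := by
  have key : ∀ p ∈ range (M+2), x ^ p • ((if p = 0 then K0 else 0) + (if p = 1 then K1 else 0))
      = (if p = 0 then K0 else 0) + (if p = 1 then x • K1 else 0) := by
    intro p _
    rcases eq_or_ne p 0 with rfl | h0
    · simp
    · rcases eq_or_ne p 1 with rfl | h1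
      · simp [h0]
      · simp [h0, h1]
  rw [Finset.sum_congr rfl key, Finset.sum_add_distrib, Finset.sum_ite_eq', Finset.sum_ite_eq']
  have m0 : (0:ℕ) ∈ range (M+2) := Finset.mem_range.mpr (by omega)
  have m1 : (1:ℕ) ∈ range (M+2) := Finset.mem_range.mpr (by omega)
  rw [if_pos m0, if_pos m1, add_comm]

open Finset in
private lemma evalA_aux {V : Type*} [AddCommGroup V] [Module ℂ V]
    (p : ℕ) (c : ℂ) (v : ℕ → V) :
    ∑ i ∈ range (p+1), ((i.choose p : ℂ) * c ^ (i - p)) • v i = v p := by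
  rw [Finset.sum_eq_single p]
  · simp
  · intro i hi hne
    have hlt : i < p := by
      have := Finset.mem_range.mp hi; omega
    simp [Nat.choose_eq_zero_of_lt hlt]
  · intro hp
    exact absurd (Finset.self_mem_range_succ p) hp

open Finset in
private lemma evalB_aux {V : Type*} [AddCommGroup V] [Module ℂ V]
    (p : ℕ) (c : ℂ) (v : ℕ → V) :
    ∑ i ∈ range (p+2), ((i.choose p : ℂ) * c ^ (i - p)) • v i
      = v p + (((p : ℂ) + 1) * c) • v (p+1) := by
  rw [Finset.sum_range_succ, evalA_aux]
  congr 2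
  · rw [Nat.choose_succ_self_right]
    push_cast
    rw [Nat.add_sub_cancel_left]
    ring


/-- The conformal derivation equation (E) for a family `d^0, …, d^n` of linear maps
from `V` into maps `ℂ → V`, on the quadratic Lie conformal algebra of the
Gel'fand–Dorfman bialgebra `(V, circ, br)`; the formal variable `∂` is evaluated
at `x : ℂ`. -/
def ConfDerEq {V : Type*} [AddCommGroup V] [Module ℂ V]
    (circ br : V →ₗ[ℂ] V →ₗ[ℂ] V) (n : ℕ) (d : ℕ → V →ₗ[ℂ] (ℂ → V)) : Prop :=
  ∀ (a b : V) (l m x : ℂ),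
    (x + l) • (∑ i ∈ Finset.range (n + 1), x ^ i • d i (circ b a) l)
      + m • (∑ i ∈ Finset.range (n + 1), x ^ i • d i (circ a b + circ b a) l)
      + (∑ i ∈ Finset.range (n + 1), x ^ i • d i (br b a) l)
    = (∑ i ∈ Finset.range (n + 1), (-l - m) ^ i •
        (x • circ b (d i a l) + (l + m) • (circ (d i a l) b + circ b (d i a l))
          + br b (d i a l)))
      + (∑ i ∈ Finset.range (n + 1), (m + x) ^ i •
        (x • circ (d i b l) a + m • (circ (d i b l) a + circ a (d i b l))
          + br (d i b l) a))

open Finset in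
private lemma reduceE_aux {V : Type*} [AddCommGroup V] [Module ℂ V]
    (circ br : V →ₗ[ℂ] V →ₗ[ℂ] V) (N : ℕ) (d : ℕ → V →ₗ[ℂ] (ℂ → V))
    (h0 : d (N+1) = 0) (hE : ConfDerEq circ br (N+1) d) : ConfDerEq circ br N d := by
  intro a b l μ x
  have h := hE a b l μ x
  simpa [Finset.sum_range_succ, h0] using h

open Finset in
private lemma enlargeE_aux {V : Type*} [AddCommGroup V] [Module ℂ V]
    (circ br : V →ₗ[ℂ] V →ₗ[ℂ] V) (N : ℕ) (d : ℕ → V →ₗ[ℂ] (ℂ → V))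
    (h0 : d (N+1) = 0) (hE : ConfDerEq circ br N d) : ConfDerEq circ br (N+1) d := by
  intro a b l μ x
  have h := hE a b l μ x
  simpa [Finset.sum_range_succ, h0] using h

open Finset in
private lemma step_lemma_aux {V : Type*} [AddCommGroup V] [Module ℂ V]
    (circ br : V →ₗ[ℂ] V →ₗ[ℂ] V)
    (comm : ∀ y z : V, circ y z = circ z y)
    (e : V) (k : ℂ) (hk : k ≠ 0) (hx : ∀ b : V, circ e b = k • b)
    (j : ℕ) (d : ℕ → V →ₗ[ℂ] (ℂ → V))
    (hpoly : ∀ (i : ℕ) (a : V), ∃ (N : ℕ) (v : ℕ → V),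
      ∀ t : ℂ, d i a t = ∑ jj ∈ Finset.range N, t ^ jj • v jj)
    (hE : ConfDerEq circ br (j+2) d) : d (j+2) = 0 := by
  have key : ∀ (b : V) (l : ℂ), l ≠ 0 → d (j+2) b l = 0 := by
    intro b l hl
    have extract : ∀ (μ : ℂ) (p : ℕ), p < j + 4 →
        (((if p = 0 then 0 else
              ∑ i ∈ range (j+3), ((i.choose (p-1) : ℂ) * (0:ℂ) ^ (i - (p-1))) • d i (circ b e) l)
            + ∑ i ∈ range (j+3), ((i.choose p : ℂ) * (0:ℂ) ^ (i - p)) •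
                (l • d i (circ b e) l + μ • d i (circ e b + circ b e) l + d i (br b e) l))
          - ((if p = 0 then
                ∑ i ∈ range (j+3), (-l - μ) ^ i •
                  ((l + μ) • (circ (d i e l) b + circ b (d i e l)) + br b (d i e l))
              else 0)
            + (if p = 1 then ∑ i ∈ range (j+3), (-l - μ) ^ i • circ b (d i e l) else 0))
          - ((if p = 0 then 0 else
              ∑ i ∈ range (j+3), ((i.choose (p-1) : ℂ) * μ ^ (i - (p-1))) • circ (d i b l) e)
            + ∑ i ∈ range (j+3), ((i.choose p : ℂ) * μ ^ (i - p)) •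
                (μ • (circ (d i b l) e + circ e (d i b l)) + br (d i b l) e))) = 0 := by
      intro μ
      apply polyfun_coeff_zero_aux (N := j+4)
      intro x hxne
      have h := hE e b l μ x
      simp only [show j + 2 + 1 = j + 3 from rfl] at h
      rw [← sub_eq_zero] at h
      have lhs_eq : (x + l) • (∑ i ∈ range (j+3), x ^ i • d i (circ b e) l)
          + μ • (∑ i ∈ range (j+3), x ^ i • d i (circ e b + circ b e) l)
          + (∑ i ∈ range (j+3), x ^ i • d i (br b e) l)
          = ∑ p ∈ range (j+4), x ^ p •
              ((if p = 0 then 0 else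
                  ∑ i ∈ range (j+3), ((i.choose (p-1) : ℂ) * (0:ℂ) ^ (i - (p-1))) • d i (circ b e) l)
                + ∑ i ∈ range (j+3), ((i.choose p : ℂ) * (0:ℂ) ^ (i - p)) •
                    (l • d i (circ b e) l + μ • d i (circ e b + circ b e) l + d i (br b e) l)) := by
        have pre : (x + l) • (∑ i ∈ range (j+3), x ^ i • d i (circ b e) l)
            + μ • (∑ i ∈ range (j+3), x ^ i • d i (circ e b + circ b e) l)
            + (∑ i ∈ range (j+3), x ^ i • d i (br b e) l)
            = ∑ i ∈ range (j+3), ((0:ℂ) + x) ^ i •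
                (x • d i (circ b e) l
                  + (l • d i (circ b e) l + μ • d i (circ e b + circ b e) l + d i (br b e) l)) := by
          rw [Finset.smul_sum, Finset.smul_sum, ← Finset.sum_add_distrib, ← Finset.sum_add_distrib]
          refine Finset.sum_congr rfl fun i _ => ?_
          rw [zero_add]
          module
        rw [pre, rep_sum_aux (j+3) 0]
      have rhs1_eq : (∑ i ∈ range (j+3), (-l - μ) ^ i •
            (x • circ b (d i e l) + (l + μ) • (circ (d i e l) b + circ b (d i e l))
              + br b (d i e l)))
          = ∑ p ∈ range (j+4), x ^ p •
              ((if p = 0 then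
                  ∑ i ∈ range (j+3), (-l - μ) ^ i •
                    ((l + μ) • (circ (d i e l) b + circ b (d i e l)) + br b (d i e l))
                else 0)
                + (if p = 1 then ∑ i ∈ range (j+3), (-l - μ) ^ i • circ b (d i e l) else 0)) := by
        have pre : (∑ i ∈ range (j+3), (-l - μ) ^ i •
              (x • circ b (d i e l) + (l + μ) • (circ (d i e l) b + circ b (d i e l))
                + br b (d i e l)))
            = x • (∑ i ∈ range (j+3), (-l - μ) ^ i • circ b (d i e l))
              + ∑ i ∈ range (j+3), (-l - μ) ^ i •
                  ((l + μ) • (circ (d i e l) b + circ b (d i e l)) + br b (d i e l)) := by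
          rw [Finset.smul_sum, ← Finset.sum_add_distrib]
          refine Finset.sum_congr rfl fun i _ => ?_
          module
        rw [pre, rep_lin_aux (j+2)]
      have rhs2_eq : (∑ i ∈ range (j+3), (μ + x) ^ i •
            (x • circ (d i b l) e + μ • (circ (d i b l) e + circ e (d i b l))
              + br (d i b l) e))
          = ∑ p ∈ range (j+4), x ^ p •
              ((if p = 0 then 0 else
                  ∑ i ∈ range (j+3), ((i.choose (p-1) : ℂ) * μ ^ (i - (p-1))) • circ (d i b l) e)
                + ∑ i ∈ range (j+3), ((i.choose p : ℂ) * μ ^ (i - p)) •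
                    (μ • (circ (d i b l) e + circ e (d i b l)) + br (d i b l) e)) := by
        have pre : (∑ i ∈ range (j+3), (μ + x) ^ i •
              (x • circ (d i b l) e + μ • (circ (d i b l) e + circ e (d i b l))
                + br (d i b l) e))
            = ∑ i ∈ range (j+3), (μ + x) ^ i •
                (x • circ (d i b l) e
                  + (μ • (circ (d i b l) e + circ e (d i b l)) + br (d i b l) e)) := by
          refine Finset.sum_congr rfl fun i _ => ?_
          rw [add_assoc]
        rw [pre, rep_sum_aux (j+3) μ]
      refine Eq.trans ?_ h
      rw [lhs_eq, rhs1_eq, rhs2_eq]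
      rw [sub_add_eq_sub_sub, ← Finset.sum_sub_distrib, ← Finset.sum_sub_distrib]
      exact Finset.sum_congr rfl fun p _ => by rw [smul_sub, smul_sub]
    have hA := extract 0 (j+2) (by omega)
    have hB := extract (-l) (j+2) (by omega)
    have hne0 : ¬ (j + 2 = 0) := by omega
    have hne1 : ¬ (j + 2 = 1) := by omega
    rw [if_neg hne0, if_neg hne0, if_neg hne0, if_neg hne1] at hA hB
    have hsub1 : j + 2 - 1 = j + 1 := rfl
    rw [hsub1] at hA hB
    simp only [show j+3 = (j+1)+2 from rfl] at hA hB
    rw [evalB_aux (j+1) 0, evalB_aux (j+1) 0] at hA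
    rw [evalB_aux (j+1) 0, evalB_aux (j+1) (-l)] at hB
    rw [show (j+1)+2 = (j+2)+1 from rfl] at hA hB
    rw [evalA_aux (j+2) 0, evalA_aux (j+2) 0] at hA
    rw [evalA_aux (j+2) 0, evalA_aux (j+2) (-l)] at hB
    have hbe : circ b e = k • b := by rw [comm, hx]
    have hc2 : d (j+2) (circ e b + circ b e) l = (2*k) • d (j+2) b l := by
      rw [hx b, hbe, ← add_smul]
      have : k + k = 2*k := by ring
      rw [this, map_smul]
      rfl
    have hγ2 : circ (d (j+2) b l) e = k • d (j+2) b l := by rw [comm, hx]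
    have hT2 : circ e (d (j+2) b l) = k • d (j+2) b l := hx _
    rw [hc2, hγ2, hT2] at hA hB
    have hw : ((((j+1 : ℕ) : ℂ) + 1) * (l * k)) • d (j+2) b l = 0 := by
      have hAB : _ - _ = (0:V) - 0 := congrArg₂ (· - ·) hB hA
      rw [sub_zero] at hAB
      refine Eq.trans ?_ hAB
      module
    rcases smul_eq_zero.mp hw with hc | hv
    · exfalso
      have h1 : (((j+1 : ℕ) : ℂ) + 1) ≠ 0 := by
        have : (((j+1 : ℕ) : ℂ) + 1) = ((j+2 : ℕ) : ℂ) := by push_cast; ring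
        rw [this]
        exact Nat.cast_ne_zero.mpr (by omega)
      exact (mul_ne_zero h1 (mul_ne_zero hl hk)) hc
    · exact hv
  apply LinearMap.ext
  intro b
  funext t
  obtain ⟨N, v, hv⟩ := hpoly (j+2) b
  have hz : ∀ p, p < N → v p = 0 := by
    apply polyfun_coeff_zero_aux
    intro s hs
    rw [← hv s]
    exact key b s hs
  rw [hv t]
  simp only [LinearMap.zero_apply, Pi.zero_apply]
  exact Finset.sum_eq_zero fun p hp => by rw [hz p (Finset.mem_range.mp hp), smul_zero]

open Finset in
private lemma gs_aux {V : Type*} [AddCommGroup V] [Module ℂ V]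
    (circ br : V →ₗ[ℂ] V →ₗ[ℂ] V) (d : ℕ → V →ₗ[ℂ] (ℂ → V))
    (hE1 : ConfDerEq circ br 1 d) (a b : V) (l : ℂ) :
    (d 1 (circ b a) l = circ (d 1 b l) a)
    ∧ (circ (d 1 a l) b + circ b (d 1 a l) = circ (d 1 b l) a + circ a (d 1 b l))
    ∧ (d 0 (circ b a) l + l • d 1 (circ b a) l + d 1 (br b a) l
        = circ b (d 0 a l) - l • circ b (d 1 a l) + circ (d 0 b l) a + br (d 1 b l) a)
    ∧ (l • d 0 (circ b a) l + d 0 (br b a) l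
        = l • (circ (d 0 a l) b + circ b (d 0 a l))
          - (l ^ 2) • (circ (d 1 a l) b + circ b (d 1 a l))
          + br b (d 0 a l) - l • br b (d 1 a l) + br (d 0 b l) a) := by
  have key : ∀ x μ : ℂ,
      (((l • d 0 (circ b a) l + d 0 (br b a) l)
          - (l • (circ (d 0 a l) b + circ b (d 0 a l))
            - (l ^ 2) • (circ (d 1 a l) b + circ b (d 1 a l))
            + br b (d 0 a l) - l • br b (d 1 a l) + br (d 0 b l) a))
        + μ • (d 0 (circ a b + circ b a) l
          - ((circ (d 0 a l) b + circ b (d 0 a l))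
            - (2*l) • (circ (d 1 a l) b + circ b (d 1 a l))
            - br b (d 1 a l) + circ (d 0 b l) a + circ a (d 0 b l) + br (d 1 b l) a))
        + μ^2 • ((circ (d 1 a l) b + circ b (d 1 a l))
            - (circ (d 1 b l) a + circ a (d 1 b l))))
      + x • ((d 0 (circ b a) l + l • d 1 (circ b a) l + d 1 (br b a) l
            - (circ b (d 0 a l) - l • circ b (d 1 a l) + circ (d 0 b l) a + br (d 1 b l) a))
          + μ • (d 1 (circ a b + circ b a) l + circ b (d 1 a l)
            - (2:ℂ) • circ (d 1 b l) a - circ a (d 1 b l)))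
      + x^2 • (d 1 (circ b a) l - circ (d 1 b l) a) = 0 := by
    intro x μ
    have h := hE1 a b l μ x
    rw [Finset.sum_range_succ, Finset.sum_range_succ, Finset.sum_range_succ,
      Finset.sum_range_succ, Finset.sum_range_succ,
      Finset.sum_range_succ, Finset.sum_range_succ, Finset.sum_range_succ,
      Finset.sum_range_succ, Finset.sum_range_succ,
      Finset.sum_range_zero, Finset.sum_range_zero, Finset.sum_range_zero,
      Finset.sum_range_zero, Finset.sum_range_zero] at h
    simp only [pow_zero, pow_one, one_smul, zero_add] at h
    refine Eq.trans ?_ (sub_eq_zero.mpr h)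
    module
  obtain ⟨h00, h01, h02, h10, h11, h20⟩ := nine_extract_aux (fun x μ => key x μ)
  exact ⟨sub_eq_zero.mp h20, sub_eq_zero.mp h02, sub_eq_zero.mp h10, sub_eq_zero.mp h00⟩

/-- Let `V` be a finite-dimensional Gel'fand–Dorfman bialgebra over
`ℂ` with an element `x` and `k ≠ 0` such that `x∘b = k·b` for all `b`.  If
`d^0, …, d^n` are linear maps from `V` into the space of polynomial maps `ℂ → V`
satisfying the conformal derivation equation (E), then `d^i = 0` for all `i ≥ 2` and
(G1)–(G4) hold. -/
theorem stmt_12 {V : Type*} [AddCommGroup V] [Module ℂ V] [FiniteDimensional ℂ V]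
    (circ br : V →ₗ[ℂ] V →ₗ[ℂ] V)
    -- Novikov algebra axioms for `∘ = circ`
    (hNov1 : ∀ a b c : V, circ (circ a b) c - circ a (circ b c)
      = circ (circ b a) c - circ b (circ a c))
    (hNov2 : ∀ a b c : V, circ (circ a b) c = circ (circ a c) b)
    -- Lie algebra axioms for `[·,·] = br`
    (hSkew : ∀ a b : V, br a b = - br b a)
    (hJacobi : ∀ a b c : V, br (br a b) c + br (br b c) a + br (br c a) b = 0)
    -- compatibility condition of the Gel'fand–Dorfman bialgebra
    (hCompat : ∀ a b c : V, br (circ a b) c - br (circ a c) b + circ (br a b) c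
      - circ (br a c) b - circ a (br b c) = 0)
    -- an element `x` with `x∘b = k·b` for all `b`, `k ≠ 0`
    (x : V) (k : ℂ) (hk : k ≠ 0) (hx : ∀ b : V, circ x b = k • b)
    (n : ℕ) (d : ℕ → V →ₗ[ℂ] (ℂ → V))
    -- the family consists only of `d^0, …, d^n` (so `d^i = 0` for `i > n`)
    (hd : ∀ i : ℕ, n < i → d i = 0)
    -- each `d^i(a)` is a polynomial map `ℂ → V`
    (hpoly : ∀ (i : ℕ) (a : V), ∃ (N : ℕ) (v : ℕ → V),
      ∀ t : ℂ, d i a t = ∑ j ∈ Finset.range N, t ^ j • v j)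
    (hE : ConfDerEq circ br n d) :
    -- `d^i = 0` for all `i ≥ 2`
    (∀ i : ℕ, 2 ≤ i → d i = 0)
    -- (G1)
    ∧ (∀ (a b : V) (l : ℂ), d 1 (circ b a) l = circ (d 1 b l) a)
    -- (G2)
    ∧ (∀ (a b : V) (l : ℂ),
        circ (d 1 a l) b + circ b (d 1 a l) = circ (d 1 b l) a + circ a (d 1 b l))
    -- (G3)
    ∧ (∀ (a b : V) (l : ℂ),
        d 0 (circ b a) l + l • d 1 (circ b a) l + d 1 (br b a) l
          = circ b (d 0 a l) - l • circ b (d 1 a l) + circ (d 0 b l) a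
            + br (d 1 b l) a)
    -- (G4)
    ∧ (∀ (a b : V) (l : ℂ),
        l • d 0 (circ b a) l + d 0 (br b a) l
          = l • (circ (d 0 a l) b + circ b (d 0 a l))
            - (l ^ 2) • (circ (d 1 a l) b + circ b (d 1 a l))
            + br b (d 0 a l) - l • br b (d 1 a l) + br (d 0 b l) a) := by
  have comm : ∀ y z : V, circ y z = circ z y := by
    intro y z
    have h := hNov2 x y z
    rw [hx y, hx z] at h
    simp only [map_smul, LinearMap.smul_apply] at h
    exact smul_right_injective V hk h
  have kill : ∀ N : ℕ, ConfDerEq circ br N d → ∀ i, 2 ≤ i → i ≤ N → d i = 0 := by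
    intro N
    induction N with
    | zero => intro _ i h2 h0; omega
    | succ N ih =>
      intro hE' i h2 hiN
      rcases Nat.lt_or_ge N 1 with hN | hN
      · omega
      · obtain ⟨j, hj⟩ : ∃ j, N + 1 = j + 2 := ⟨N - 1, by omega⟩
        have htop : d (N+1) = 0 := by
          rw [hj] at hE' ⊢
          exact step_lemma_aux circ br comm x k hk hx j d hpoly hE'
        rcases Nat.lt_or_ge N i with hlt | hge
        · have : i = N+1 := by omega
          rw [this]; exact htop
        · exact ih (reduceE_aux circ br N d htop hE') i h2 hge
  have hzero : ∀ i, 2 ≤ i → d i = 0 := by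
    intro i h2
    by_cases h : i ≤ n
    · exact kill n hE i h2 h
    · exact hd i (by omega)
  have hE1 : ConfDerEq circ br 1 d := by
    have down : ∀ N : ℕ, ConfDerEq circ br (N+1) d → ConfDerEq circ br 1 d := by
      intro N
      induction N with
      | zero => exact fun h => h
      | succ N ih =>
        intro h
        exact ih (reduceE_aux circ br (N+1) d (hzero (N+2) (by omega)) h)
    match n, hE, hd with
    | 0, hE, hd => exact enlargeE_aux circ br 0 d (hd 1 (by omega)) hE
    | (n'+1), hE, _ => exact down n' hE
  refine ⟨hzero, ?_, ?_, ?_, ?_⟩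
  · exact fun a b l => (gs_aux circ br d hE1 a b l).1
  · exact fun a b l => (gs_aux circ br d hE1 a b l).2.1
  · exact fun a b l => (gs_aux circ br d hE1 a b l).2.2.1
  · exact fun a b l => (gs_aux circ br d hE1 a b l).2.2.2
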